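/- If I is an irreducible ideal of a numerical semigroup Λ and the graph G_I(Λ) has at least 3 vertices, then G_I(Λ) is not a complete graph. -/

import Mathlib

/-- A numerical semigroup: a cofinite additive submonoid of ℕ. -/
def IsNumericalSemigroup (Λ : Set ℕ) : Prop :=
  0 ∈ Λ ∧ (∀ a ∈ Λ, ∀ b ∈ Λ, a + b ∈ Λ) ∧ (Λᶜ).Finite

/-- An ideal of a numerical semigroup: a nonempty subset `I ⊆ Λ` with `I + Λ ⊆ I`. -/
def IsIdeal (Λ I : Set ℕ) : Prop :=
  I.Nonempty ∧ I ⊆ Λ ∧ ∀ i ∈ I, ∀ s ∈ Λ, i + s ∈ I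

/-- An irreducible ideal: one that is not the intersection of two proper ideals
each properly containing it. -/
def IsIrreducibleIdeal (Λ I : Set ℕ) : Prop :=
  IsIdeal Λ I ∧
    ¬ ∃ J K : Set ℕ, IsIdeal Λ J ∧ IsIdeal Λ K ∧ J ≠ Λ ∧ K ≠ Λ ∧
      I ⊂ J ∧ I ⊂ K ∧ I = J ∩ K

/-- The graph `G_I(Λ)`: vertices are the nonzero elements of `Λ \ I`,
and `x ~ y` iff `x + y ∈ I`. -/
def semigroupGraph (Λ I : Set ℕ) : SimpleGraph ↥((Λ \ I) \ {0}) where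
  Adj x y := (x : ℕ) ≠ (y : ℕ) ∧ (x : ℕ) + (y : ℕ) ∈ I
  symm := by
    constructor; intro x y h
    exact ⟨fun e => h.1 e.symm, by rw [add_comm]; exact h.2⟩
  loopless := by constructor; intro x h; exact h.1 rfl

/-- `B(x) = {y ∈ Λ : x - y ∈ Λ}` (i.e. `y + z = x` for some `z ∈ Λ`). -/
def Bset (Λ : Set ℕ) (x : ℕ) : Set ℕ :=
  {y ∈ Λ | ∃ z ∈ Λ, y + z = x}

/-- The minimal generating set of a numerical semigroup: the nonzero elements
that are not sums of two nonzero elements. -/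
def MinimalGenerators (Λ : Set ℕ) : Set ℕ :=
  {a ∈ Λ | a ≠ 0 ∧ ¬ ∃ b ∈ Λ, ∃ c ∈ Λ, b ≠ 0 ∧ c ≠ 0 ∧ a = b + c}

/-- `L_x^{(p)}`: representations of `x` as a positive-integer combination of
exactly `p` distinct minimal generators of `Λ`, encoded as finitely supported
functions from generators to positive coefficients. -/
def Lrep (Λ : Set ℕ) (x : ℕ) (p : ℕ) : Set (ℕ →₀ ℕ) :=
  {u | (↑u.support : Set ℕ) ⊆ MinimalGenerators Λ ∧ u.support.card = p ∧
    u.sum (fun a c => c * a) = x}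

/-- `G` contains a subdivision of `H`: branch vertices joined by internally
disjoint paths. -/
def SimpleGraph.ContainsSubdivision {V W : Type*} (G : SimpleGraph V)
    (H : SimpleGraph W) : Prop :=
  ∃ b : W ↪ V, ∃ P : ∀ i j : W, H.Adj i j → G.Walk (b i) (b j),
    (∀ i j (h : H.Adj i j), (P i j h).IsPath) ∧
    (∀ i j (h : H.Adj i j) (k : W), b k ∈ (P i j h).support → k = i ∨ k = j) ∧
    (∀ i j (h : H.Adj i j) (i' j' : W) (h' : H.Adj i' j'),
      ({i, j} : Set W) ≠ {i', j'} →
      ∀ v, v ∈ (P i j h).support → v ∈ (P i' j' h').support →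
        v = b i ∨ v = b j)

/-- Planarity via Kuratowski's criterion: no subgraph homeomorphic to
`K₅` or `K₃,₃`. -/
def SimpleGraph.Planar {V : Type*} (G : SimpleGraph V) : Prop :=
  ¬ G.ContainsSubdivision (⊤ : SimpleGraph (Fin 5)) ∧
  ¬ G.ContainsSubdivision (completeBipartiteGraph (Fin 3) (Fin 3))

/-!
If `G_I(Λ)` were complete, any two distinct vertices would sum into `I`. Then for a vertex `x`
the ideal `I ∪ (x + Λ)` adds to `I` only `x` and `2x`: if `x + s ∉ I` then `s ∉ I`, so `s = 0`
or `s = x`. Among three vertices there are two, `x` and `y`, with `x ≠ 2y` and `y ≠ 2x`; then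
`I ∪ (x + Λ)` and `I ∪ (y + Λ)` are proper ideals strictly containing `I` whose intersection
is `I`, contradicting irreducibility.
-/

theorem Set.exists_pair_ne_double_of_three_le_ncard {S : Set ℕ} (h : 3 ≤ S.ncard) :
    ∃ x ∈ S, ∃ y ∈ S, x ≠ y ∧ x ≠ 2 * y ∧ y ≠ 2 * x := by
  obtain ⟨t, hts, htc⟩ := Set.exists_subset_card_eq h
  obtain ⟨a, b, c, hab, hac, hbc, rfl⟩ := Set.ncard_eq_three.mp htc
  have ha : a ∈ S := hts (by simp)
  have hb : b ∈ S := hts (by simp)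
  have hc : c ∈ S := hts (by simp)
  by_cases h₁ : a ≠ 2 * b ∧ b ≠ 2 * a
  · exact ⟨a, ha, b, hb, hab, h₁⟩
  by_cases h₂ : a ≠ 2 * c ∧ c ≠ 2 * a
  · exact ⟨a, ha, c, hc, hac, h₂⟩
  exact ⟨b, hb, c, hc, hbc, by omega, by omega⟩

def idealAdjoin (Λ I : Set ℕ) (z : ℕ) : Set ℕ :=
  I ∪ (z + ·) '' Λ

section idealAdjoin

variable {Λ I : Set ℕ} {z : ℕ}

theorem IsIdeal.idealAdjoin (hΛ : IsNumericalSemigroup Λ) (hI : IsIdeal Λ I) (hz : z ∈ Λ) :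
    IsIdeal Λ (idealAdjoin Λ I z) := by
  obtain ⟨hIne, hIΛ, hIadd⟩ := hI
  refine ⟨hIne.mono Set.subset_union_left, ?_, ?_⟩
  · rintro n (hn | ⟨s, hs, rfl⟩)
    · exact hIΛ hn
    · exact hΛ.2.1 z hz s hs
  · rintro n (hn | ⟨s, hs, rfl⟩) u hu
    · exact Or.inl (hIadd n hn u hu)
    · exact Or.inr ⟨s + u, hΛ.2.1 s hs u hu, (add_assoc z s u).symm⟩

theorem ssubset_idealAdjoin (hΛ : IsNumericalSemigroup Λ) (hzI : z ∉ I) :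
    I ⊂ idealAdjoin Λ I z :=
  (Set.ssubset_iff_of_subset Set.subset_union_left).2
    ⟨z, Or.inr ⟨0, hΛ.1, add_zero z⟩, hzI⟩

theorem add_mem_of_semigroupGraph_eq_top (htop : semigroupGraph Λ I = ⊤) {x y : ℕ}
    (hx : x ∈ (Λ \ I) \ {0}) (hy : y ∈ (Λ \ I) \ {0}) (hxy : x ≠ y) : x + y ∈ I := by
  have hadj : (semigroupGraph Λ I).Adj ⟨x, hx⟩ ⟨y, hy⟩ := by
    rw [htop, SimpleGraph.top_adj, Ne, Subtype.mk.injEq]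
    exact hxy
  exact hadj.2

theorem eq_or_eq_two_mul_of_mem_idealAdjoin (htop : semigroupGraph Λ I = ⊤) (hI : IsIdeal Λ I)
    (hz : z ∈ (Λ \ I) \ {0}) {w : ℕ} (hw : w ∈ idealAdjoin Λ I z) (hwI : w ∉ I) :
    w = z ∨ w = 2 * z := by
  obtain hw | ⟨s, hsΛ, rfl⟩ := hw
  · exact absurd hw hwI
  have hsI : s ∉ I := fun hsI => hwI (by simpa only [add_comm s z] using hI.2.2 s hsI z hz.1.1)
  rcases eq_or_ne s 0 with rfl | hs0
  · exact Or.inl (add_zero z)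
  rcases eq_or_ne z s with rfl | hzs
  · exact Or.inr (two_mul z).symm
  exact absurd (add_mem_of_semigroupGraph_eq_top htop hz ⟨⟨hsΛ, hsI⟩, hs0⟩ hzs) hwI

theorem notMem_idealAdjoin (htop : semigroupGraph Λ I = ⊤) (hI : IsIdeal Λ I)
    (hz : z ∈ (Λ \ I) \ {0}) {v : ℕ} (hv : v ∈ (Λ \ I) \ {0})
    (hvz : v ≠ z) (hv2z : v ≠ 2 * z) :
    v ∉ idealAdjoin Λ I z := fun hvJ =>
  (eq_or_eq_two_mul_of_mem_idealAdjoin htop hI hz hvJ hv.1.2).elim hvz hv2z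

theorem idealAdjoin_inter_idealAdjoin (htop : semigroupGraph Λ I = ⊤) (hI : IsIdeal Λ I)
    {x y : ℕ} (hx : x ∈ (Λ \ I) \ {0}) (hy : y ∈ (Λ \ I) \ {0})
    (hxy : x ≠ y) (hx2y : x ≠ 2 * y) (hy2x : y ≠ 2 * x) :
    idealAdjoin Λ I x ∩ idealAdjoin Λ I y = I := by
  refine Set.Subset.antisymm (fun w ⟨hwx, hwy⟩ => ?_)
    (Set.subset_inter Set.subset_union_left Set.subset_union_left)
  by_contra hwI
  have := eq_or_eq_two_mul_of_mem_idealAdjoin htop hI hx hwx hwI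
  have := eq_or_eq_two_mul_of_mem_idealAdjoin htop hI hy hwy hwI
  omega

end idealAdjoin

/-- If `I` is an irreducible ideal and `G_I(Λ)` has at least 3
vertices, then `G_I(Λ)` is not complete. -/
theorem semigroupGraph_not_complete (Λ I : Set ℕ)
    (hΛ : IsNumericalSemigroup Λ) (hI : IsIrreducibleIdeal Λ I)
    (h3 : 3 ≤ ((Λ \ I) \ {0}).ncard) :
    semigroupGraph Λ I ≠ ⊤ := by
  intro htop
  obtain ⟨hIdeal, hIrr⟩ := hI
  obtain ⟨x, hx, y, hy, hxy, hx2y, hy2x⟩ := Set.exists_pair_ne_double_of_three_le_ncard h3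
  refine hIrr ⟨idealAdjoin Λ I x, idealAdjoin Λ I y, hIdeal.idealAdjoin hΛ hx.1.1,
    hIdeal.idealAdjoin hΛ hy.1.1, fun hJ => ?_, fun hK => ?_, ssubset_idealAdjoin hΛ hx.1.2,
    ssubset_idealAdjoin hΛ hy.1.2, ?_⟩
  · exact notMem_idealAdjoin htop hIdeal hx hy hxy.symm hy2x (hJ.symm ▸ hy.1.1)
  · exact notMem_idealAdjoin htop hIdeal hy hx hxy hx2y (hK.symm ▸ hx.1.1)
  · exact (idealAdjoin_inter_idealAdjoin htop hIdeal hx hy hxy hx2y hy2x).symm
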